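/- arXiv:2410.15840 — 8 statements merged into one kernel-verified Lean document; each statement's English description precedes it below -/
import Mathlib

section
/- Let f, k, n_A, n_B be natural numbers, let Γ_A, Γ_B ∈ ℂ^{(f+k) × f} satisfy Γ_A† Γ_B = I_f, and let σ ∈ ℂ^{f × f} be a permutation matrix. For any A ∈ ℂ^{n_A × f} and B ∈ ℂ^{n_B × f}, define the encodings A′ = A (Γ_A σ)† and B′ = B (Γ_B σ)†. Then A′ (B′)† = A B†. In particular, if A and B have real entries, A′ (B′)† = A Bᵀ. -/
open Matrix

lemma perm_conjTranspose_mul (f : ℕ) (e : Equiv.Perm (Fin f)) :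
    (e.permMatrix ℂ)ᴴ * e.permMatrix ℂ = 1 := by
  have hH : (e.permMatrix ℂ)ᴴ = (e.permMatrix ℂ)ᵀ := by
    ext i j
    simp [conjTranspose_apply, transpose_apply, Equiv.Perm.permMatrix,
      PEquiv.toMatrix_apply, Equiv.toPEquiv_apply, Option.mem_def]
  rw [hH, ← PEquiv.toMatrix_symm, ← Equiv.toPEquiv_symm, ← PEquiv.toMatrix_trans,
    ← Equiv.toPEquiv_trans]
  simp

/-- Correctness of the OKRA encoding at the matrix level:
`A' * B'ᴴ = A * Bᴴ`, and if `A`, `B` have real entries then `A' * B'ᴴ = A * Bᵀ`. -/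
theorem okra_encoding_matrix_product
    (f k nA nB : ℕ)
    (ΓA ΓB : Matrix (Fin (f + k)) (Fin f) ℂ)
    (hΓ : ΓAᴴ * ΓB = 1)
    (σ : Matrix (Fin f) (Fin f) ℂ)
    (hσ : ∃ e : Equiv.Perm (Fin f), σ = e.permMatrix ℂ)
    (A : Matrix (Fin nA) (Fin f) ℂ) (B : Matrix (Fin nB) (Fin f) ℂ) :
    (A * (ΓA * σ)ᴴ) * (B * (ΓB * σ)ᴴ)ᴴ = A * Bᴴ ∧
      ((∀ i j, (A i j).im = 0) → (∀ i j, (B i j).im = 0) →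
        (A * (ΓA * σ)ᴴ) * (B * (ΓB * σ)ᴴ)ᴴ = A * Bᵀ) := by
  obtain ⟨e, rfl⟩ := hσ
  have hσσ : (e.permMatrix ℂ)ᴴ * e.permMatrix ℂ = 1 := perm_conjTranspose_mul f e
  have key : (A * (ΓA * e.permMatrix ℂ)ᴴ) * (B * (ΓB * e.permMatrix ℂ)ᴴ)ᴴ = A * Bᴴ := by
    calc (A * (ΓA * e.permMatrix ℂ)ᴴ) * (B * (ΓB * e.permMatrix ℂ)ᴴ)ᴴ
        = A * ((e.permMatrix ℂ)ᴴ * ((ΓAᴴ * ΓB) * (e.permMatrix ℂ))) * Bᴴ := by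
          simp only [conjTranspose_mul, conjTranspose_conjTranspose, Matrix.mul_assoc]
      _ = A * Bᴴ := by rw [hΓ, Matrix.one_mul, hσσ, Matrix.mul_one]
  refine ⟨key, fun _ hB => ?_⟩
  have hBt : Bᴴ = Bᵀ := by
    ext i j
    simp [conjTranspose_apply, Complex.ext_iff, Complex.conj_re, Complex.conj_im, hB j i]
  rw [key, hBt]
end

section
/- Let f, k, n_A, n_B be natural numbers, let Γ_A, Γ_B ∈ ℂ^{(f+k) × f} satisfy Γ_A† Γ_B = I_f, and let σ ∈ ℂ^{f × f} be a permutation matrix. For A ∈ ℂ^{n_A × f} and B ∈ ℂ^{n_B × f}, set A′ = A (Γ_A σ)† and B′ = B (Γ_B σ)†. Then for every row index i of A and every row index j of B, the 1×1 product of the i-th row of A′ with the conjugate transpose of the j-th row of B′ equals the product of the i-th row of A with the conjugate transpose of the j-th row of B, i.e. (A′)_i (B′)_j† = A_i B_j†. -/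
open Matrix

lemma perm_conjTranspose_mul_self {f : ℕ} (e : Equiv.Perm (Fin f)) :
    (e.permMatrix ℂ)ᴴ * e.permMatrix ℂ = 1 := by
  have ht : (e.permMatrix ℂ)ᴴ = (e.permMatrix ℂ)ᵀ := by
    ext a b
    simp [Equiv.Perm.permMatrix, PEquiv.toMatrix, PEquiv.single, Equiv.toPEquiv,
      conjTranspose_apply, Option.mem_def]
  rw [ht, ← PEquiv.toMatrix_symm, ← Equiv.toPEquiv_symm, Equiv.Perm.permMatrix,
    ← PEquiv.toMatrix_trans, ← Equiv.toPEquiv_trans]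
  simp

lemma row_submatrix_mul {m n p q : ℕ} (M : Matrix (Fin m) (Fin n) ℂ)
    (N : Matrix (Fin n) (Fin p) ℂ) (i : Fin m) :
    (M * N).submatrix (fun _ : Fin q => i) id =
      M.submatrix (fun _ : Fin q => i) id * N := by
  ext a b
  simp [mul_apply]

/-- Row-wise correctness of the OKRA encoding: the 1×1 product of the `i`-th row of `A'`
with the conjugate transpose of the `j`-th row of `B'` equals that of the raw rows. -/
theorem okra_encoding_rowwise_product
    (f k nA nB : ℕ)
    (ΓA ΓB : Matrix (Fin (f + k)) (Fin f) ℂ)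
    (hΓ : ΓAᴴ * ΓB = 1)
    (σ : Matrix (Fin f) (Fin f) ℂ)
    (hσ : ∃ e : Equiv.Perm (Fin f), σ = e.permMatrix ℂ)
    (A : Matrix (Fin nA) (Fin f) ℂ) (B : Matrix (Fin nB) (Fin f) ℂ)
    (i : Fin nA) (j : Fin nB) :
    ((A * (ΓA * σ)ᴴ).submatrix (fun _ : Fin 1 => i) id) *
        ((B * (ΓB * σ)ᴴ).submatrix (fun _ : Fin 1 => j) id)ᴴ =
      (A.submatrix (fun _ : Fin 1 => i) id) * (B.submatrix (fun _ : Fin 1 => j) id)ᴴ := by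
  obtain ⟨e, rfl⟩ := hσ
  have key : (ΓA * e.permMatrix ℂ)ᴴ * (ΓB * e.permMatrix ℂ) = 1 := by
    rw [conjTranspose_mul, Matrix.mul_assoc, ← Matrix.mul_assoc ΓAᴴ, hΓ,
      Matrix.one_mul, perm_conjTranspose_mul_self]
  rw [row_submatrix_mul, row_submatrix_mul,
    show ((B.submatrix (fun _ : Fin 1 => j) id) * (ΓB * e.permMatrix ℂ)ᴴ)ᴴ =
        (ΓB * e.permMatrix ℂ) * (B.submatrix (fun _ : Fin 1 => j) id)ᴴ from by
      rw [conjTranspose_mul, conjTranspose_conjTranspose],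
    Matrix.mul_assoc, ← Matrix.mul_assoc ((ΓA * e.permMatrix ℂ)ᴴ), key, Matrix.one_mul]
end

section
/- Let f, k be natural numbers and let Γ_A, Γ_B ∈ ℂ^{(f+k) × f} satisfy Γ_A† Γ_B = I_f, Γ_A† Γ_A = I_f, and Γ_B† Γ_B = I_f. For real row vectors a, b ∈ ℝ^f (viewed as 1 × f complex matrices), set a′ = a Γ_A† and b′ = b Γ_B†. Then the encoded squared-distance expression d(a′, b′) := a′(a′)† + b′(b′)† − a′(b′)† − b′(a′)† equals ‖a − b‖², the squared Euclidean distance between a and b (as a real number coerced into ℂ). -/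
open Matrix

/-- The encoded squared-distance expression computed by the server equals the true
squared Euclidean distance `‖a − b‖²`. -/
theorem okra_encoded_squared_distance
    (f k : ℕ) (ΓA ΓB : Matrix (Fin (f + k)) (Fin f) ℂ)
    (hAB : ΓAᴴ * ΓB = 1) (hAA : ΓAᴴ * ΓA = 1) (hBB : ΓBᴴ * ΓB = 1)
    (a b : Fin f → ℝ) :
    let aC : Matrix (Fin 1) (Fin f) ℂ := Matrix.of fun _ j => (a j : ℂ)
    let bC : Matrix (Fin 1) (Fin f) ℂ := Matrix.of fun _ j => (b j : ℂ)
    let a' := aC * ΓAᴴ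
    let b' := bC * ΓBᴴ
    (a' * a'ᴴ) 0 0 + (b' * b'ᴴ) 0 0 - (a' * b'ᴴ) 0 0 - (b' * a'ᴴ) 0 0 =
      ((∑ j, (a j - b j) ^ 2 : ℝ) : ℂ) := by
  intro aC bC a' b'
  have hBA : ΓBᴴ * ΓA = 1 := by
    have := congrArg conjTranspose hAB
    simpa [Matrix.conjTranspose_mul] using this
  have h1 : a' * a'ᴴ = aC * aCᴴ := by
    simp only [a', Matrix.conjTranspose_mul, Matrix.conjTranspose_conjTranspose]
    rw [Matrix.mul_assoc, ← Matrix.mul_assoc ΓAᴴ, hAA, Matrix.one_mul]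
  have h2 : b' * b'ᴴ = bC * bCᴴ := by
    simp only [b', Matrix.conjTranspose_mul, Matrix.conjTranspose_conjTranspose]
    rw [Matrix.mul_assoc, ← Matrix.mul_assoc ΓBᴴ, hBB, Matrix.one_mul]
  have h3 : a' * b'ᴴ = aC * bCᴴ := by
    simp only [a', b', Matrix.conjTranspose_mul, Matrix.conjTranspose_conjTranspose]
    rw [Matrix.mul_assoc, ← Matrix.mul_assoc ΓAᴴ, hAB, Matrix.one_mul]
  have h4 : b' * a'ᴴ = bC * aCᴴ := by
    simp only [a', b', Matrix.conjTranspose_mul, Matrix.conjTranspose_conjTranspose]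
    rw [Matrix.mul_assoc, ← Matrix.mul_assoc ΓBᴴ, hBA, Matrix.one_mul]
  rw [h1, h2, h3, h4]
  simp only [Matrix.mul_apply, Matrix.conjTranspose_apply, Matrix.of_apply,
    Complex.star_def, Complex.conj_ofReal]
  push_cast
  rw [← Finset.sum_add_distrib, ← Finset.sum_sub_distrib, ← Finset.sum_sub_distrib]
  congr 1
  ext j
  simp only [aC, bC, Matrix.of_apply, Complex.conj_ofReal]
  ring
end

section
/- Let f, k be natural numbers and let Γ_A, Γ_B ∈ ℂ^{(f+k) × f} satisfy Γ_A† Γ_B = I_f. For real row vectors a, b ∈ ℝ^f (viewed as 1 × f complex matrices), set a′ = a Γ_A† and b′ = b Γ_B†. Then the encoded linear kernel K†_lin(a′, b′) := a′ (b′)† equals the linear kernel K_lin(a, b) = a bᵀ (the real inner product of a and b, coerced into ℂ). -/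
open Matrix

/-- Correctness of the encoded linear kernel: `K†_lin(a', b') = K_lin(a, b) = a bᵀ`. -/
theorem okra_linear_kernel
    (f k : ℕ) (ΓA ΓB : Matrix (Fin (f + k)) (Fin f) ℂ)
    (hΓ : ΓAᴴ * ΓB = 1)
    (a b : Fin f → ℝ) :
    let aC : Matrix (Fin 1) (Fin f) ℂ := Matrix.of fun _ j => (a j : ℂ)
    let bC : Matrix (Fin 1) (Fin f) ℂ := Matrix.of fun _ j => (b j : ℂ)
    let a' := aC * ΓAᴴ
    let b' := bC * ΓBᴴ
    (a' * b'ᴴ) 0 0 = ((∑ j, a j * b j : ℝ) : ℂ) := by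
  intro aC bC a' b'
  have h1 : a' * b'ᴴ = aC * bCᴴ := by
    simp only [a', b', conjTranspose_mul, conjTranspose_conjTranspose]
    rw [Matrix.mul_assoc, ← Matrix.mul_assoc ΓAᴴ, hΓ, Matrix.one_mul]
  rw [h1]
  simp [Matrix.mul_apply, aC, bC, ← Complex.ofReal_mul]
end

section
/- Let f, k be natural numbers, let Γ_A, Γ_B ∈ ℂ^{(f+k) × f} satisfy Γ_A† Γ_B = I_f, Γ_A† Γ_A = I_f, and Γ_B† Γ_B = I_f, and let γ, l ∈ ℝ with l ≠ 0. For real row vectors a, b ∈ ℝ^f (viewed as 1 × f complex matrices), set a′ = a Γ_A†, b′ = b Γ_B†, and d(a′,b′) = a′(a′)† + b′(b′)† − a′(b′)† − b′(a′)†. Then the encoded Gaussian kernel K†_RBF(a′, b′) := γ² · exp(−d(a′,b′)/(2l²)) (using the complex exponential) equals the Gaussian kernel K_RBF(a, b) = γ² · exp(−‖a − b‖²/(2l²)) (a real number coerced into ℂ). -/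
open Matrix

/-- Correctness of the encoded Gaussian (RBF) kernel:
`γ² exp(−d(a',b')/(2l²)) = γ² exp(−‖a−b‖²/(2l²))`. -/
theorem okra_gaussian_kernel
    (f k : ℕ) (ΓA ΓB : Matrix (Fin (f + k)) (Fin f) ℂ)
    (hAB : ΓAᴴ * ΓB = 1) (hAA : ΓAᴴ * ΓA = 1) (hBB : ΓBᴴ * ΓB = 1)
    (γ l : ℝ) (hl : l ≠ 0)
    (a b : Fin f → ℝ) :
    let aC : Matrix (Fin 1) (Fin f) ℂ := Matrix.of fun _ j => (a j : ℂ)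
    let bC : Matrix (Fin 1) (Fin f) ℂ := Matrix.of fun _ j => (b j : ℂ)
    let a' := aC * ΓAᴴ
    let b' := bC * ΓBᴴ
    let D : ℂ := (a' * a'ᴴ) 0 0 + (b' * b'ᴴ) 0 0 - (a' * b'ᴴ) 0 0 - (b' * a'ᴴ) 0 0
    (γ : ℂ) ^ 2 * Complex.exp (-D / (2 * (l : ℂ) ^ 2)) =
      ((γ ^ 2 * Real.exp (-(∑ j, (a j - b j) ^ 2) / (2 * l ^ 2)) : ℝ) : ℂ) := by
  intro aC bC a' b' D
  have hBA : ΓBᴴ * ΓA = 1 := by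
    have := congrArg Matrix.conjTranspose hAB
    simpa [Matrix.conjTranspose_mul] using this
  have h1 : a' * a'ᴴ = aC * aCᴴ := by
    show aC * ΓAᴴ * (aC * ΓAᴴ)ᴴ = _
    rw [Matrix.conjTranspose_mul, Matrix.conjTranspose_conjTranspose,
      ← Matrix.mul_assoc, Matrix.mul_assoc aC, hAA, Matrix.mul_one]
  have h2 : b' * b'ᴴ = bC * bCᴴ := by
    show bC * ΓBᴴ * (bC * ΓBᴴ)ᴴ = _
    rw [Matrix.conjTranspose_mul, Matrix.conjTranspose_conjTranspose,
      ← Matrix.mul_assoc, Matrix.mul_assoc bC, hBB, Matrix.mul_one]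
  have h3 : a' * b'ᴴ = aC * bCᴴ := by
    show aC * ΓAᴴ * (bC * ΓBᴴ)ᴴ = _
    rw [Matrix.conjTranspose_mul, Matrix.conjTranspose_conjTranspose,
      ← Matrix.mul_assoc, Matrix.mul_assoc aC, hAB, Matrix.mul_one]
  have h4 : b' * a'ᴴ = bC * aCᴴ := by
    show bC * ΓBᴴ * (aC * ΓAᴴ)ᴴ = _
    rw [Matrix.conjTranspose_mul, Matrix.conjTranspose_conjTranspose,
      ← Matrix.mul_assoc, Matrix.mul_assoc bC, hBA, Matrix.mul_one]
  have hD : D = ((∑ j, (a j - b j) ^ 2 : ℝ) : ℂ) := by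
    show (a' * a'ᴴ) 0 0 + (b' * b'ᴴ) 0 0 - (a' * b'ᴴ) 0 0 - (b' * a'ᴴ) 0 0 = _
    rw [h1, h2, h3, h4]
    simp only [aC, bC, Matrix.mul_apply, Matrix.conjTranspose_apply, Matrix.of_apply,
      Complex.star_def, Complex.conj_ofReal]
    push_cast
    rw [← Finset.sum_add_distrib, ← Finset.sum_sub_distrib, ← Finset.sum_sub_distrib]
    congr 1
    ext j
    ring
  rw [hD]
  push_cast
  ring
end

section
/- Let f, k be natural numbers, let Γ_A, Γ_B ∈ ℂ^{(f+k) × f} satisfy Γ_A† Γ_B = I_f, Γ_A† Γ_A = I_f, and Γ_B† Γ_B = I_f, and let γ, l, α ∈ ℝ with l ≠ 0 and α > 0. For real row vectors a, b ∈ ℝ^f (viewed as 1 × f complex matrices), set a′ = a Γ_A†, b′ = b Γ_B†, and d(a′,b′) = a′(a′)† + b′(b′)† − a′(b′)† − b′(a′)†. Then the encoded rational quadratic kernel K†_RQ(a′, b′) := γ² · (1 + d(a′,b′)/(2αl²))^(−α) (using the complex power function) equals the rational quadratic kernel K_RQ(a, b) = γ² · (1 + ‖a − b‖²/(2αl²))^(−α)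 (a real number coerced into ℂ). -/
open Matrix

/-- Correctness of the encoded rational quadratic kernel:
`γ² (1 + d(a',b')/(2αl²))^(−α) = γ² (1 + ‖a−b‖²/(2αl²))^(−α)`,
with complex power on the left and real power on the right. -/
theorem okra_rational_quadratic_kernel
    (f k : ℕ) (ΓA ΓB : Matrix (Fin (f + k)) (Fin f) ℂ)
    (hAB : ΓAᴴ * ΓB = 1) (hAA : ΓAᴴ * ΓA = 1) (hBB : ΓBᴴ * ΓB = 1)
    (γ l α : ℝ) (hl : l ≠ 0) (hα : 0 < α)
    (a b : Fin f → ℝ) :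
    let aC : Matrix (Fin 1) (Fin f) ℂ := Matrix.of fun _ j => (a j : ℂ)
    let bC : Matrix (Fin 1) (Fin f) ℂ := Matrix.of fun _ j => (b j : ℂ)
    let a' := aC * ΓAᴴ
    let b' := bC * ΓBᴴ
    let D : ℂ := (a' * a'ᴴ) 0 0 + (b' * b'ᴴ) 0 0 - (a' * b'ᴴ) 0 0 - (b' * a'ᴴ) 0 0
    (γ : ℂ) ^ 2 * (1 + D / (2 * (α : ℂ) * (l : ℂ) ^ 2)) ^ (-(α : ℂ)) =
      ((γ ^ 2 * (1 + (∑ j, (a j - b j) ^ 2) / (2 * α * l ^ 2)) ^ (-α) : ℝ) : ℂ) := by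
  intro aC bC a' b' D
  have hBA : ΓBᴴ * ΓA = 1 := by
    have := congrArg conjTranspose hAB
    simpa [conjTranspose_mul] using this
  have key : ∀ (u v : Matrix (Fin 1) (Fin f) ℂ) (Γ1 Γ2 : Matrix (Fin (f + k)) (Fin f) ℂ),
      Γ1ᴴ * Γ2 = 1 → (u * Γ1ᴴ) * (v * Γ2ᴴ)ᴴ = u * vᴴ := by
    intro u v Γ1 Γ2 h
    rw [conjTranspose_mul, conjTranspose_conjTranspose, Matrix.mul_assoc,
      ← Matrix.mul_assoc Γ1ᴴ, h, Matrix.one_mul]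
  have hD : D = ((∑ j, (a j - b j) ^ 2 : ℝ) : ℂ) := by
    show ((aC * ΓAᴴ) * (aC * ΓAᴴ)ᴴ) 0 0 + ((bC * ΓBᴴ) * (bC * ΓBᴴ)ᴴ) 0 0
      - ((aC * ΓAᴴ) * (bC * ΓBᴴ)ᴴ) 0 0 - ((bC * ΓBᴴ) * (aC * ΓAᴴ)ᴴ) 0 0 = _
    rw [key aC aC ΓA ΓA hAA, key bC bC ΓB ΓB hBB, key aC bC ΓA ΓB hAB, key bC aC ΓB ΓA hBA]
    simp only [Matrix.mul_apply, conjTranspose_apply, of_apply, Complex.star_def,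
      Complex.conj_ofReal]
    push_cast
    rw [← Finset.sum_add_distrib, ← Finset.sum_sub_distrib, ← Finset.sum_sub_distrib]
    congr 1
    ext j
    simp only [aC, bC, of_apply, Complex.conj_ofReal]
    ring
  rw [hD]
  have hS : (0 : ℝ) ≤ ∑ j, (a j - b j) ^ 2 :=
    Finset.sum_nonneg fun j _ => sq_nonneg _
  have hbase : (0 : ℝ) ≤ 1 + (∑ j, (a j - b j) ^ 2) / (2 * α * l ^ 2) := by
    have h2 : 0 < 2 * α * l ^ 2 := by positivity
    positivity
  have := Complex.ofReal_cpow hbase (-α)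
  rw [Complex.ofReal_mul, this]
  push_cast
  ring
end

section
/- (Theorem 1 of the paper, combined form.) Let f, k, n_A, n_B be natural numbers, let Γ_A, Γ_B ∈ ℂ^{(f+k) × f} satisfy Γ_P† Γ_Q = I_f for all P, Q ∈ {A, B}, and let σ ∈ ℂ^{f × f} be a permutation matrix. Let A ∈ ℝ^{n_A × f} and B ∈ ℝ^{n_B × f} be real matrices (viewed as complex matrices with real entries), and set A′ = A (Γ_A σ)†, B′ = B (Γ_B σ)†. Fix parameters γ, l, α ∈ ℝ with l ≠ 0 and α > 0 and a degree d ∈ ℕ. Then for every row index i of A and every row index j of B, writing a = A_i, b = B_j, a′ = (A′)_i, b′ = (B′)_j, and D = a′(a′)† + b′(b′)† − a′(b′)† − b′(a′)†, all four equalities hold: (1) a′(b′)† = a bᵀ; (2) γ² exp(−D/(2l²)) = γ² exp(−‖a−b‖²/(2l²)); (3) (1 + a′(b′)†)^d = (1 + a bᵀ)^d; (4) γ²(1 + D/(2αl²))^(−α) = γ²(1 + ‖a−b‖²/(2αl²))^(−α), where exp and the power are the complex exponential and complex power, and real quantities on the right-hand sides are coerced into ℂ. -/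
open Matrix

lemma perm_unitary {f : ℕ} (e : Equiv.Perm (Fin f)) :
    (e.permMatrix ℂ)ᴴ * (e.permMatrix ℂ) = 1 := by
  have h1 : (e.permMatrix ℂ)ᴴ = (e.permMatrix ℂ)ᵀ := by
    ext i j
    simp [conjTranspose_apply, Equiv.Perm.permMatrix, PEquiv.toMatrix_apply, apply_ite (star : ℂ → ℂ)]
  rw [h1, Equiv.Perm.permMatrix, ← PEquiv.toMatrix_symm, ← Equiv.toPEquiv_symm,
    ← PEquiv.toMatrix_trans, ← Equiv.toPEquiv_trans]
  simp

lemma key {f k nP nQ : ℕ}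
    (ΓP ΓQ : Matrix (Fin (f + k)) (Fin f) ℂ)
    (hPQ : ΓPᴴ * ΓQ = 1)
    (σ : Matrix (Fin f) (Fin f) ℂ)
    (hσ : ∃ e : Equiv.Perm (Fin f), σ = e.permMatrix ℂ)
    (P : Matrix (Fin nP) (Fin f) ℝ) (Q : Matrix (Fin nQ) (Fin f) ℝ)
    (i : Fin nP) (j : Fin nQ) :
    ((P.map (Complex.ofReal) * (ΓP * σ)ᴴ).submatrix (fun _ : Fin 1 => i) id *
      ((Q.map (Complex.ofReal) * (ΓQ * σ)ᴴ).submatrix (fun _ : Fin 1 => j) id)ᴴ) 0 0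
      = ((∑ t, P i t * Q j t : ℝ) : ℂ) := by
  obtain ⟨e, rfl⟩ := hσ
  have hσu := perm_unitary e
  have hmain : (P.map (Complex.ofReal) * (ΓP * e.permMatrix ℂ)ᴴ) *
      (Q.map (Complex.ofReal) * (ΓQ * e.permMatrix ℂ)ᴴ)ᴴ
      = P.map (Complex.ofReal) * (Q.map (Complex.ofReal))ᴴ := by
    simp only [conjTranspose_mul, conjTranspose_conjTranspose, Matrix.mul_assoc]
    rw [← Matrix.mul_assoc ΓPᴴ, hPQ, Matrix.one_mul, ← Matrix.mul_assoc (e.permMatrix ℂ)ᴴ,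
      hσu, Matrix.one_mul]
  rw [conjTranspose_submatrix,
    show ((P.map Complex.ofReal * (ΓP * e.permMatrix ℂ)ᴴ).submatrix (fun _ : Fin 1 => i) id *
        ((Q.map Complex.ofReal * (ΓQ * e.permMatrix ℂ)ᴴ)ᴴ.submatrix id (fun _ : Fin 1 => j)))
      = _ from
      (submatrix_mul _ _ (fun _ : Fin 1 => i) id (fun _ : Fin 1 => j)
        Function.bijective_id).symm,
    hmain]
  simp [Matrix.mul_apply, Complex.conj_ofReal]

/-- Theorem 1 of the paper (combined form): from the encodings `A' = A(Γ_A σ)ᴴ`,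
`B' = B(Γ_B σ)ᴴ` of real data matrices, the central server correctly computes the
linear, Gaussian, polynomial and rational quadratic kernels between any two rows. -/
theorem okra_correctness
    (f k nA nB : ℕ)
    (ΓA ΓB : Matrix (Fin (f + k)) (Fin f) ℂ)
    (hAA : ΓAᴴ * ΓA = 1) (hAB : ΓAᴴ * ΓB = 1)
    (hBA : ΓBᴴ * ΓA = 1) (hBB : ΓBᴴ * ΓB = 1)
    (σ : Matrix (Fin f) (Fin f) ℂ)
    (hσ : ∃ e : Equiv.Perm (Fin f), σ = e.permMatrix ℂ)
    (A : Matrix (Fin nA) (Fin f) ℝ) (B : Matrix (Fin nB) (Fin f) ℝ)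
    (γ l α : ℝ) (hl : l ≠ 0) (hα : 0 < α) (d : ℕ)
    (i : Fin nA) (j : Fin nB) :
    let A' := A.map (Complex.ofReal) * (ΓA * σ)ᴴ
    let B' := B.map (Complex.ofReal) * (ΓB * σ)ᴴ
    let a' : Matrix (Fin 1) (Fin (f + k)) ℂ := A'.submatrix (fun _ => i) id
    let b' : Matrix (Fin 1) (Fin (f + k)) ℂ := B'.submatrix (fun _ => j) id
    let D : ℂ := (a' * a'ᴴ) 0 0 + (b' * b'ᴴ) 0 0 - (a' * b'ᴴ) 0 0 - (b' * a'ᴴ) 0 0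
    -- (1) linear kernel
    ((a' * b'ᴴ) 0 0 = ((∑ t, A i t * B j t : ℝ) : ℂ)) ∧
    -- (2) Gaussian kernel
    ((γ : ℂ) ^ 2 * Complex.exp (-D / (2 * (l : ℂ) ^ 2)) =
      ((γ ^ 2 * Real.exp (-(∑ t, (A i t - B j t) ^ 2) / (2 * l ^ 2)) : ℝ) : ℂ)) ∧
    -- (3) polynomial kernel
    ((1 + (a' * b'ᴴ) 0 0) ^ d = (((1 + ∑ t, A i t * B j t) ^ d : ℝ) : ℂ)) ∧
    -- (4) rational quadratic kernel
    ((γ : ℂ) ^ 2 * (1 + D / (2 * (α : ℂ) * (l : ℂ) ^ 2)) ^ (-(α : ℂ)) =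
      ((γ ^ 2 * (1 + (∑ t, (A i t - B j t) ^ 2) / (2 * α * l ^ 2)) ^ (-α) : ℝ) : ℂ)) := by
  intro A' B' a' b' D
  have h1 : (a' * b'ᴴ) 0 0 = ((∑ t, A i t * B j t : ℝ) : ℂ) :=
    key ΓA ΓB hAB σ hσ A B i j
  have haa : (a' * a'ᴴ) 0 0 = ((∑ t, A i t * A i t : ℝ) : ℂ) :=
    key ΓA ΓA hAA σ hσ A A i i
  have hbb : (b' * b'ᴴ) 0 0 = ((∑ t, B j t * B j t : ℝ) : ℂ) :=
    key ΓB ΓB hBB σ hσ B B j j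
  have hba : (b' * a'ᴴ) 0 0 = ((∑ t, B j t * A i t : ℝ) : ℂ) :=
    key ΓB ΓA hBA σ hσ B A j i
  have hr : (∑ t, A i t * A i t) + (∑ t, B j t * B j t) - (∑ t, A i t * B j t)
      - (∑ t, B j t * A i t) = ∑ t, (A i t - B j t) ^ 2 := by
    rw [← Finset.sum_add_distrib, ← Finset.sum_sub_distrib, ← Finset.sum_sub_distrib]
    exact Finset.sum_congr rfl fun t _ => by ring
  have hD : D = ((∑ t, (A i t - B j t) ^ 2 : ℝ) : ℂ) := by
    show (a' * a'ᴴ) 0 0 + (b' * b'ᴴ) 0 0 - (a' * b'ᴴ) 0 0 - (b' * a'ᴴ) 0 0 = _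
    rw [haa, hbb, h1, hba, ← hr]
    push_cast
    ring
  have hr0 : (0:ℝ) ≤ ∑ t, (A i t - B j t) ^ 2 :=
    Finset.sum_nonneg fun t _ => sq_nonneg _
  refine ⟨h1, ?_, ?_, ?_⟩
  · rw [hD, ← Complex.ofReal_pow]
    rw [show -((∑ t, (A i t - B j t) ^ 2 : ℝ) : ℂ) / (2 * (l : ℂ) ^ 2)
        = ((-(∑ t, (A i t - B j t) ^ 2) / (2 * l ^ 2) : ℝ) : ℂ) by push_cast; ring,
      ← Complex.ofReal_exp, ← Complex.ofReal_mul]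
  · rw [h1]; push_cast; ring
  · have hx : (0:ℝ) ≤ 1 + (∑ t, (A i t - B j t) ^ 2) / (2 * α * l ^ 2) := by positivity
    rw [hD, Complex.ofReal_mul, Complex.ofReal_cpow hx, Complex.ofReal_neg,
      ← Complex.ofReal_pow]
    congr 1
    push_cast
    ring
end

section
/- Let f, k, n, m be natural numbers, let Γ_A, Γ_X ∈ ℂ^{(f+k) × f} satisfy Γ_X† Γ_A = I_f, and let σ ∈ ℂ^{f × f} be a permutation matrix. Let A ∈ ℝ^{n × f} be existing data and X ∈ ℝ^{m × f} be newly contributed data (both viewed as complex matrices with real entries), with encodings A′ = A (Γ_A σ)† and X′ = X (Γ_X σ)†. Then X′ (A′)† = X Aᵀ; that is, the kernel block between the new data and the existing encoded data computed by the server equals the true cross-product of the raw data. -/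
open Matrix

/-- Data adaptability of OKRA: the kernel block between newly contributed encoded data
`X' = X(Γ_X σ)ᴴ` and existing encoded data `A' = A(Γ_A σ)ᴴ` equals the true
cross-product `X Aᵀ` of the raw real data. -/
theorem okra_data_adaptability
    (f k n m : ℕ)
    (ΓA ΓX : Matrix (Fin (f + k)) (Fin f) ℂ)
    (hΓ : ΓXᴴ * ΓA = 1)
    (σ : Matrix (Fin f) (Fin f) ℂ)
    (hσ : ∃ e : Equiv.Perm (Fin f), σ = e.permMatrix ℂ)
    (A : Matrix (Fin n) (Fin f) ℝ) (X : Matrix (Fin m) (Fin f) ℝ) :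
    (X.map Complex.ofReal * (ΓX * σ)ᴴ) * (A.map Complex.ofReal * (ΓA * σ)ᴴ)ᴴ =
      (X * Aᵀ).map Complex.ofReal := by
  obtain ⟨e, rfl⟩ := hσ
  have hσ1 : (e.permMatrix ℂ)ᴴ * (e.permMatrix ℂ) = 1 := by
    have h1 : (e.permMatrix ℂ)ᴴ = (e.permMatrix ℂ)ᵀ := by
      ext i j
      simp [conjTranspose_apply, Equiv.Perm.permMatrix, PEquiv.toMatrix_apply, apply_ite]
    rw [h1, ← PEquiv.toMatrix_symm, ← PEquiv.toMatrix_trans, ← Equiv.toPEquiv_symm,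
      ← Equiv.toPEquiv_trans]
    simp
  have hmap : (A.map Complex.ofReal)ᴴ = Aᵀ.map Complex.ofReal := by
    ext i j; simp [conjTranspose_apply]
  calc (X.map Complex.ofReal * (ΓX * e.permMatrix ℂ)ᴴ) *
        (A.map Complex.ofReal * (ΓA * e.permMatrix ℂ)ᴴ)ᴴ
      = X.map Complex.ofReal * ((e.permMatrix ℂ)ᴴ * ((ΓXᴴ * ΓA) * (e.permMatrix ℂ))) *
        (A.map Complex.ofReal)ᴴ := by
        simp only [conjTranspose_mul, conjTranspose_conjTranspose]
        simp only [Matrix.mul_assoc]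
    _ = (X * Aᵀ).map Complex.ofReal := by
        rw [hΓ, Matrix.one_mul, hσ1, Matrix.mul_one, hmap]
        ext i j
        simp [Matrix.mul_apply]
end
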